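/- For all node signs ξ_r, η_r, ξ_s, η_s ∈ {−1, 1}, all a, b, h > 0, all μ ∈ ℝ, and all G ∈ ℝ, setting γ = b/a, the 2×2 matrix (a·b·h/4) ∫_{−1}^{1} ∫_{−1}^{1} β_r^{inc}(ξ,η)ᵀ χ_G β_s^{inc}(ξ,η) dξ dη equals (G·h/4) · [[η_r η_s/γ, η_r ξ_s], [ξ_r η_s, γ·ξ_r ξ_s]]; in contrast to the compatible element, the correction factors (1 + ξ_r ξ_s/3) and (1 + η_r η_s/3) are absent from the shear stiffness. -/
import Mathlib


open MeasureTheory Matrix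

/-- Strain–displacement matrix of the incompatible bilinear rectangular element. -/
noncomputable def betaInc (a b μ ξr ηr ξ η : ℝ) : Matrix (Fin 3) (Fin 2) ℝ :=
  (1 / 2 : ℝ) • !![ξr * (1 + ηr * η) / a, -(μ * ξr * ηr * ξ) / b;
                   -(μ * ξr * ηr * η) / a, ηr * (1 + ξr * ξ) / b;
                   ηr / b, ξr / a]

/-- Shear-deformation part of the plane-strain elasticity matrix. -/
noncomputable def chiG (G : ℝ) : Matrix (Fin 3) (Fin 3) ℝ :=
  G • !![0, 0, 0; 0, 0, 0; 0, 0, 1]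

theorem shear_stiffness_block_incompatible
    (ξr ηr ξs ηs a b h μ G : ℝ)
    (hξr : ξr = -1 ∨ ξr = 1) (hηr : ηr = -1 ∨ ηr = 1)
    (hξs : ξs = -1 ∨ ξs = 1) (hηs : ηs = -1 ∨ ηs = 1)
    (ha : 0 < a) (hb : 0 < b) (hh : 0 < h) :
    (Matrix.of fun i j : Fin 2 =>
        (a * b * h / 4) *
          ∫ ξ in (-1:ℝ)..1, ∫ η in (-1:ℝ)..1,
            ((betaInc a b μ ξr ηr ξ η)ᵀ * chiG G * betaInc a b μ ξs ηs ξ η) i j) =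
      (G * h / 4) •
        !![ηr * ηs / (b / a), ηr * ξs;
           ξr * ηs, (b / a) * (ξr * ξs)] := by
  have ha' := ha.ne'
  have hb' := hb.ne'
  ext i j
  fin_cases i <;> fin_cases j <;>
    · simp [betaInc, chiG, Matrix.mul_apply, Fin.sum_univ_succ,
        intervalIntegral.integral_const, Matrix.smul_apply]
      field_simp
      ring
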